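/- Let (H,R) be a quasitriangular bialgebra with half-balance h. Then Δ(h)⁻¹·(h⊗h) = R₂₁⁻¹ is a trivializable Drinfeld twist, the twisted bialgebra satisfies H_R = H^cop with R_R = R₂₁, and Ad(h) is an isomorphism of quasitriangular bialgebras (H,R) → (H^cop, R₂₁). Moreover (Ad(h), 1⊗1) is a twist pair and k=h is an (Ad(h),1⊗1)-twisted universal k-matrix, i.e. Δ(h) = (1⊗h)·(Ad(h)⊗id)(R)·(h⊗1). -/

import Mathlib

noncomputable section
open TensorProduct

variable (F : Type*) [CommRing F] (H : Type*) [Ring H] [Bialgebra F H]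

/-- The flip map on `H ⊗ H`. -/
def τ₂ : H ⊗[F] H ≃ₐ[F] H ⊗[F] H := Algebra.TensorProduct.comm F H H

/-- Embedding of `H ⊗ H` into the first two factors of `(H ⊗ H) ⊗ H`. -/
def ι₁₂ : H ⊗[F] H →ₐ[F] (H ⊗[F] H) ⊗[F] H := Algebra.TensorProduct.includeLeft

/-- Embedding of `H ⊗ H` into the last two factors of `(H ⊗ H) ⊗ H`. -/
def ι₂₃ : H ⊗[F] H →ₐ[F] (H ⊗[F] H) ⊗[F] H :=
  Algebra.TensorProduct.map Algebra.TensorProduct.includeRight (AlgHom.id F H)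

/-- Embedding of `H ⊗ H` into the outer factors of `(H ⊗ H) ⊗ H`. -/
def ι₁₃ : H ⊗[F] H →ₐ[F] (H ⊗[F] H) ⊗[F] H :=
  Algebra.TensorProduct.map Algebra.TensorProduct.includeLeft (AlgHom.id F H)

/-- The image in `(H⊗H)ˣ` of a unit under the flip map. -/
def uflip (R : (H ⊗[F] H)ˣ) : (H ⊗[F] H)ˣ :=
  ⟨τ₂ F H ↑R, τ₂ F H ↑R⁻¹,
    by rw [← map_mul, Units.mul_inv, map_one],
    by rw [← map_mul, Units.inv_mul, map_one]⟩

/-- Conjugation by a unit, as an algebra automorphism. -/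
def Ad {A : Type*} [Ring A] [Algebra F A] (u : Aˣ) : A ≃ₐ[F] A where
  toFun x := ↑u * x * ↑u⁻¹
  invFun x := ↑u⁻¹ * x * ↑u
  left_inv x := by simp [mul_assoc]
  right_inv x := by simp [mul_assoc]
  map_mul' x y := by simp [mul_assoc]
  map_add' x y := by (try dsimp only); rw [mul_add, add_mul]
  commutes' r := by (try dsimp only); rw [← Algebra.commutes, mul_assoc, Units.mul_inv, mul_one]

/-- The unit `(g ⊗ g)` of `H ⊗ H` attached to a unit `g` of `H`. -/
def uTmul (g : Hˣ) : (H ⊗[F] H)ˣ :=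
  ⟨(↑g : H) ⊗ₜ[F] (↑g : H), (↑g⁻¹ : H) ⊗ₜ[F] (↑g⁻¹ : H),
    by rw [Algebra.TensorProduct.tmul_mul_tmul, Units.mul_inv, ← Algebra.TensorProduct.one_def],
    by rw [Algebra.TensorProduct.tmul_mul_tmul, Units.inv_mul, ← Algebra.TensorProduct.one_def]⟩

/-- The comultiplication of the bialgebra `H`. -/
def Δ : H →ₐ[F] H ⊗[F] H := Bialgebra.comulAlgHom F H

/-- The counit of the bialgebra `H`. -/
def ε : H →ₐ[F] F := Bialgebra.counitAlgHom F H

/-- The opposite comultiplication `Δ^op = flip ∘ Δ`. -/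
def Δop : H →ₐ[F] H ⊗[F] H := (τ₂ F H).toAlgHom.comp (Δ F H)

/-- `(Δ ⊗ id)` as a map `H ⊗ H → (H ⊗ H) ⊗ H`. -/
def Δ₁ : H ⊗[F] H →ₐ[F] (H ⊗[F] H) ⊗[F] H :=
  Algebra.TensorProduct.map (Δ F H) (AlgHom.id F H)

/-- `(id ⊗ Δ)`, reassociated into `(H ⊗ H) ⊗ H`. -/
def Δ₂ : H ⊗[F] H →ₐ[F] (H ⊗[F] H) ⊗[F] H :=
  ((Algebra.TensorProduct.assoc (R := F) (S := F) (T := F) (A := H) (C := H) (D := H)).symm.toAlgHom).comp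
    (Algebra.TensorProduct.map (AlgHom.id F H) (Δ F H))

/-- Quasitriangularity of an invertible `R ∈ H ⊗ H` with respect to a coproduct `Δ'`:
`R Δ'(x) = Δ'^op(x) R`, `(Δ'⊗id)(R) = R₁₃R₂₃` and `(id⊗Δ')(R) = R₁₃R₁₂`. -/
def IsQuasiTri (Δ' : H →ₐ[F] H ⊗[F] H) (R : (H ⊗[F] H)ˣ) : Prop :=
  (∀ x : H, (↑R : H ⊗[F] H) * Δ' x = τ₂ F H (Δ' x) * ↑R) ∧
  (Algebra.TensorProduct.map Δ' (AlgHom.id F H)) (↑R : H ⊗[F] H)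
      = ι₁₃ F H ↑R * ι₂₃ F H ↑R ∧
  ((Algebra.TensorProduct.assoc (R := F) (S := F) (T := F) (A := H) (C := H) (D := H)).symm
      ((Algebra.TensorProduct.map (AlgHom.id F H) Δ') (↑R : H ⊗[F] H)))
      = ι₁₃ F H ↑R * ι₁₂ F H ↑R

/-- The unit of `H ⊗ H` obtained by applying `Δ` to a unit of `H`. -/
def uComul (g : Hˣ) : (H ⊗[F] H)ˣ :=
  ⟨Δ F H ↑g, Δ F H ↑g⁻¹,
    by rw [← map_mul, Units.mul_inv, map_one],
    by rw [← map_mul, Units.inv_mul, map_one]⟩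

/-- A Drinfeld twist: an invertible `J ∈ H ⊗ H` with `(ε⊗id)(J) = 1 = (id⊗ε)(J)`
satisfying the cocycle identity `(J⊗1)(Δ⊗id)(J) = (1⊗J)(id⊗Δ)(J)`. -/
def IsTwist (J : (H ⊗[F] H)ˣ) : Prop :=
  (Algebra.TensorProduct.lid F H)
      ((Algebra.TensorProduct.map (ε F H) (AlgHom.id F H)) ↑J) = 1 ∧
  (Algebra.TensorProduct.rid F F H)
      ((Algebra.TensorProduct.map (AlgHom.id F H) (ε F H)) ↑J) = 1 ∧
  ι₁₂ F H ↑J * Δ₁ F H ↑J = ι₂₃ F H ↑J * Δ₂ F H ↑J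

/-- A twist pair `(ψ, J)`: `Δ^{op,ψ} = Ad(J) ∘ Δ` and `(ψ⊗ψ)(R₂₁) = J₂₁ R J⁻¹`. -/
def TwistPair (R : (H ⊗[F] H)ˣ) (ψ : H ≃ₐ[F] H) (J : (H ⊗[F] H)ˣ) : Prop :=
  (∀ x : H, (Algebra.TensorProduct.map ψ.toAlgHom ψ.toAlgHom)
      (τ₂ F H (Δ F H (ψ.symm x))) = ↑J * Δ F H x * ↑J⁻¹) ∧
  ((Algebra.TensorProduct.map ψ.toAlgHom ψ.toAlgHom) (τ₂ F H ↑R)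
      = ↑(uflip F H J) * ↑R * ↑J⁻¹)

/-!
Put `u = h ⊗ h`. Quasitriangularity, `R Δ(x) = Δ^op(x) R`, combined with `Δ(h) = u R` gives
`Δ(h x h⁻¹) = u Δ^op(x) u⁻¹`, and flipping both sides gives the same with `Δ` and `Δ^op` exchanged;
these are the intertwining statements. At `x = h` quasitriangularity reads `R u R = u R₂₁ R`, so
`R u = u R₂₁`; as `u² = h² ⊗ h²` is central, `u R u⁻¹ = u⁻¹ R u = R₂₁`. The remaining claims are this
identity, its flip `u R₂₁ u⁻¹ = R`, and the inverse of `Δ(h) = u R`.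
-/

lemma τ₂_τ₂ (z : H ⊗[F] H) : τ₂ F H (τ₂ F H z) = z :=
  (Algebra.TensorProduct.comm F H H).symm_apply_apply z

lemma Ad_apply {A : Type*} [Ring A] [Algebra F A] (u : Aˣ) (x : A) :
    Ad F u x = ↑u * x * ↑u⁻¹ := rfl

lemma uflip_uTmul (g : Hˣ) : uflip F H (uTmul F H g) = uTmul F H g := rfl

lemma τ₂_Ad (v : (H ⊗[F] H)ˣ) (z : H ⊗[F] H) :
    τ₂ F H (Ad F v z) = Ad F (uflip F H v) (τ₂ F H z) := by
  simp only [Ad_apply, map_mul]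
  rfl

lemma uTmul_mul (g g' : Hˣ) : uTmul F H (g * g') = uTmul F H g * uTmul F H g' :=
  Units.ext (Algebra.TensorProduct.tmul_mul_tmul _ _ _ _).symm

lemma map_Ad_Ad_apply (g : Hˣ) (z : H ⊗[F] H) :
    Algebra.TensorProduct.map (Ad F g).toAlgHom (Ad F g).toAlgHom z = Ad F (uTmul F H g) z := by
  suffices Algebra.TensorProduct.map (Ad F g).toAlgHom (Ad F g).toAlgHom
      = (Ad F (uTmul F H g)).toAlgHom from DFunLike.congr_fun this z
  refine Algebra.TensorProduct.ext' fun a b => ?_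
  show (↑g * a * ↑g⁻¹) ⊗ₜ[F] (↑g * b * ↑g⁻¹)
    = ((↑g : H) ⊗ₜ[F] (↑g : H)) * (a ⊗ₜ[F] b) * ((↑g⁻¹ : H) ⊗ₜ[F] (↑g⁻¹ : H))
  simp only [Algebra.TensorProduct.tmul_mul_tmul]

lemma tmul_mul_comm_of_central {c d : H} (hc : ∀ x : H, c * x = x * c)
    (hd : ∀ x : H, d * x = x * d) (z : H ⊗[F] H) : (c ⊗ₜ[F] d) * z = z * (c ⊗ₜ[F] d) := by
  induction z using TensorProduct.induction_on with
  | zero => simp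
  | tmul a b => simp only [Algebra.TensorProduct.tmul_mul_tmul, hc, hd]
  | add x y hx hy => rw [mul_add, add_mul, hx, hy]

lemma one_tmul_mul_map_Ad_id_mul (g : Hˣ) (z : H ⊗[F] H) :
    ((1 : H) ⊗ₜ[F] (↑g : H)) * Algebra.TensorProduct.map (Ad F g).toAlgHom (AlgHom.id F H) z
      * ((↑g : H) ⊗ₜ[F] (1 : H)) = ((↑g : H) ⊗ₜ[F] (↑g : H)) * z := by
  induction z using TensorProduct.induction_on with
  | zero => simp
  | tmul a b =>
    simp only [Algebra.TensorProduct.map_tmul, AlgEquiv.coe_toAlgHom, AlgHom.id_apply, Ad_apply,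
      Algebra.TensorProduct.tmul_mul_tmul, one_mul, mul_one, mul_assoc, Units.inv_mul]
  | add x y hx hy => rw [map_add, mul_add, add_mul, hx, hy, mul_add]

section HalfBalance

variable {F H} {R : (H ⊗[F] H)ˣ} {h : Hˣ}

lemma uComul_eq_uTmul_mul (hcoprod : Δ F H ↑h = ((↑h : H) ⊗ₜ[F] (↑h : H)) * ↑R) :
    uComul F H h = uTmul F H h * R :=
  Units.ext hcoprod

lemma comul_Ad (hR : ∀ x : H, (↑R : H ⊗[F] H) * Δ F H x = τ₂ F H (Δ F H x) * ↑R)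
    (hcoprod : Δ F H ↑h = ((↑h : H) ⊗ₜ[F] (↑h : H)) * ↑R) (x : H) :
    Δ F H (Ad F h x) = Ad F (uTmul F H h) (Δop F H x) := by
  have hΔ : Δ F H ↑h = ↑(uTmul F H h) * ↑R := hcoprod
  have hΔinv : Δ F H ↑h⁻¹ = ↑R⁻¹ * ↑(uTmul F H h)⁻¹ := by
    change (((uComul F H h)⁻¹ : (H ⊗[F] H)ˣ) : H ⊗[F] H) = _
    rw [uComul_eq_uTmul_mul hcoprod, mul_inv_rev, Units.val_mul]
  rw [Ad_apply, map_mul, map_mul, hΔ, hΔinv, Ad_apply]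
  simp only [mul_assoc]
  rw [← mul_assoc (↑R : H ⊗[F] H), hR x, mul_assoc, Units.mul_inv_cancel_left]
  rfl

lemma comulOp_Ad (hR : ∀ x : H, (↑R : H ⊗[F] H) * Δ F H x = τ₂ F H (Δ F H x) * ↑R)
    (hcoprod : Δ F H ↑h = ((↑h : H) ⊗ₜ[F] (↑h : H)) * ↑R) (x : H) :
    Δop F H (Ad F h x) = Ad F (uTmul F H h) (Δ F H x) := by
  change τ₂ F H (Δ F H (Ad F h x)) = _
  rw [comul_Ad hR hcoprod, τ₂_Ad, uflip_uTmul]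
  exact congrArg _ (τ₂_τ₂ F H _)

lemma R_mul_uTmul (hR : ∀ x : H, (↑R : H ⊗[F] H) * Δ F H x = τ₂ F H (Δ F H x) * ↑R)
    (hcoprod : Δ F H ↑h = ((↑h : H) ⊗ₜ[F] (↑h : H)) * ↑R) :
    R * uTmul F H h = uTmul F H h * uflip F H R := by
  have key : R * uTmul F H h * R = uTmul F H h * uflip F H R * R := by
    ext
    have hRh := hR ↑h
    rw [hcoprod, map_mul] at hRh
    simp only [Units.val_mul]
    rw [mul_assoc]
    exact hRh
  exact mul_right_cancel key

lemma uTmul_mul_mul_inv_eq_uflip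
    (hR : ∀ x : H, (↑R : H ⊗[F] H) * Δ F H x = τ₂ F H (Δ F H x) * ↑R)
    (hc : ∀ x : H, (↑h * ↑h : H) * x = x * (↑h * ↑h))
    (hcoprod : Δ F H ↑h = ((↑h : H) ⊗ₜ[F] (↑h : H)) * ↑R) :
    uTmul F H h * R * (uTmul F H h)⁻¹ = uflip F H R := by
  set u := uTmul F H h with hu
  have hcentral : u * u * R = R * (u * u) := by
    ext
    rw [← uTmul_mul]
    exact tmul_mul_comm_of_central F H hc hc ↑R
  calc u * R * u⁻¹ = u⁻¹ * (u * u * R) * u⁻¹ := by group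
    _ = u⁻¹ * (R * (u * u)) * u⁻¹ := by rw [hcentral]
    _ = u⁻¹ * (R * u) := by group
    _ = uflip F H R := by rw [R_mul_uTmul hR hcoprod, ← hu]; group

end HalfBalance

theorem half_balance_almost_cylindrical (R : (H ⊗[F] H)ˣ) (h : Hˣ)
    (hR : IsQuasiTri F H (Δ F H) R)
    (hc : ∀ x : H, (↑h * ↑h : H) * x = x * (↑h * ↑h))
    (hcoprod : Δ F H ↑h = ((↑h : H) ⊗ₜ[F] (↑h : H)) * ↑R) :
    (((↑h : H) ⊗ₜ[F] (↑h : H)) * ↑(uComul F H h)⁻¹ = ↑(uflip F H R)⁻¹) ∧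
    (∀ x : H, ↑R * Δ F H x * ↑R⁻¹ = Δop F H x) ∧
    (↑(uflip F H R) * ↑R * ↑R⁻¹ = (↑(uflip F H R) : H ⊗[F] H)) ∧
    (∀ x : H, Δop F H (↑h * x * ↑h⁻¹)
        = (Algebra.TensorProduct.map (Ad F h).toAlgHom (Ad F h).toAlgHom)
            (Δ F H x)) ∧
    ((Algebra.TensorProduct.map (Ad F h).toAlgHom (Ad F h).toAlgHom) ↑R
        = (↑(uflip F H R) : H ⊗[F] H)) ∧
    TwistPair F H R (Ad F h) 1 ∧
    (Δ F H ↑h = ((1 : H) ⊗ₜ[F] (↑h : H))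
        * (Algebra.TensorProduct.map (Ad F h).toAlgHom (AlgHom.id F H)) ↑R
        * ((↑h : H) ⊗ₜ[F] (1 : H))) := by
  obtain ⟨hRΔ, -, -⟩ := hR
  have hAd : uTmul F H h * R * (uTmul F H h)⁻¹ = uflip F H R :=
    uTmul_mul_mul_inv_eq_uflip hRΔ hc hcoprod
  have hAdR : Ad F (uTmul F H h) ↑R = ↑(uflip F H R) := congrArg Units.val hAd
  refine ⟨?_, fun x => ?_, Units.mul_inv_cancel_right _ _, fun x => ?_, ?_, ⟨fun x => ?_, ?_⟩, ?_⟩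
  · have hinv : uTmul F H h * (uComul F H h)⁻¹ = (uflip F H R)⁻¹ := by
      rw [uComul_eq_uTmul_mul hcoprod, ← hAd]
      group
    exact congrArg Units.val hinv
  · rw [hRΔ x, Units.mul_inv_cancel_right]
    rfl
  · rw [map_Ad_Ad_apply]
    exact comulOp_Ad hRΔ hcoprod x
  · rw [map_Ad_Ad_apply, hAdR]
  · rw [map_Ad_Ad_apply]
    change Ad F _ (Δop F H _) = _
    rw [← comul_Ad hRΔ hcoprod, AlgEquiv.apply_symm_apply]
    simp
  · have hflip : τ₂ F H (Ad F (uTmul F H h) ↑R) = ↑R := by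
      rw [hAdR]
      exact τ₂_τ₂ F H _
    rw [map_Ad_Ad_apply, ← uflip_uTmul, ← τ₂_Ad, hflip]
    simp [uflip]
  · rw [one_tmul_mul_map_Ad_id_mul, hcoprod]
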